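/- For every integer n ≥ 2, the quantity Δ := (n/2)·log(n²/(n²-1)) + (1/2)·log(1 - 2/(n+1)) is strictly negative and satisfies Δ < -1/(2n+2); i.e. the per-step log-volume shrink of the central-cut ellipsoid method is at most -1/(2(n+1)). -/

import Mathlib

/-- The per-step log-volume shrink of the central-cut ellipsoid method is strictly
negative and at most `-1/(2(n+1))` for every `n ≥ 2`. -/
theorem stmt16 (n : ℕ) (hn : 2 ≤ n) :
    ((n : ℝ) / 2) * Real.log ((n : ℝ) ^ 2 / ((n : ℝ) ^ 2 - 1))
        + (1 / 2) * Real.log (1 - 2 / ((n : ℝ) + 1)) < 0 ∧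
    ((n : ℝ) / 2) * Real.log ((n : ℝ) ^ 2 / ((n : ℝ) ^ 2 - 1))
        + (1 / 2) * Real.log (1 - 2 / ((n : ℝ) + 1)) < -1 / (2 * (n : ℝ) + 2) := by
  have hx : (2:ℝ) ≤ (n:ℝ) := by exact_mod_cast hn
  set x : ℝ := (n : ℝ) with hxdef
  have hx1 : (0:ℝ) < x - 1 := by linarith
  have hx0 : (0:ℝ) < x := by linarith
  have hx2 : (0:ℝ) < x + 1 := by linarith
  have hsq : (0:ℝ) < x ^ 2 - 1 := by nlinarith
  have e1 : Real.log (x ^ 2 / (x ^ 2 - 1))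
      = 2 * Real.log x - Real.log (x - 1) - Real.log (x + 1) := by
    rw [Real.log_div (by positivity) (by linarith), Real.log_pow]
    have h : x ^ 2 - 1 = (x - 1) * (x + 1) := by ring
    rw [h, Real.log_mul (by linarith) (by linarith)]
    push_cast; ring
  have e2 : (1 - 2 / (x + 1)) = (x - 1) / (x + 1) := by field_simp; ring
  have e3 : Real.log ((x - 1) / (x + 1)) = Real.log (x - 1) - Real.log (x + 1) :=
    Real.log_div (by linarith) (by linarith)
  -- bound 1 : log x - log (x+1) ≤ -1/(x+1)
  have h1 : Real.log x - Real.log (x + 1) ≤ -1 / (x + 1) := by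
    have := Real.log_le_sub_one_of_pos (show (0:ℝ) < x / (x + 1) by positivity)
    rw [Real.log_div (by linarith) (by linarith)] at this
    have h' : x / (x + 1) - 1 = -1 / (x + 1) := by field_simp; ring
    linarith [this, h'.le]
  -- bound 2 : log (x^2/(x^2-1)) < 1/(x^2-1), strict
  have h2 : Real.log (x ^ 2 / (x ^ 2 - 1)) < 1 / (x ^ 2 - 1) := by
    have hne : x ^ 2 / (x ^ 2 - 1) ≠ 1 := by
      intro h
      have : x ^ 2 = x ^ 2 - 1 := by
        field_simp at h; linarith
      linarith
    have := Real.log_lt_sub_one_of_pos (show (0:ℝ) < x ^ 2 / (x ^ 2 - 1) by positivity) hne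
    have h' : x ^ 2 / (x ^ 2 - 1) - 1 = 1 / (x ^ 2 - 1) := by field_simp; ring
    linarith
  have h2' : Real.log (x ^ 2 / (x ^ 2 - 1)) = 2 * Real.log x - Real.log (x - 1) - Real.log (x + 1) := e1
  set L1 := Real.log (x - 1)
  set L2 := Real.log x
  set L3 := Real.log (x + 1)
  have hD : 2 * L2 - L1 - L3 < 1 / (x ^ 2 - 1) := by rw [← h2']; exact h2
  have key : x / 2 * Real.log (x ^ 2 / (x ^ 2 - 1))
      + 1 / 2 * Real.log (1 - 2 / (x + 1)) < -1 / (2 * x + 2) := by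
    rw [h2', e2, e3]
    have hprod : (x - 1) / 2 * (2 * L2 - L1 - L3) < (x - 1) / 2 * (1 / (x ^ 2 - 1)) := by
      apply mul_lt_mul_of_pos_left hD (by linarith)
    have hval : (x - 1) / 2 * (1 / (x ^ 2 - 1)) = 1 / (2 * (x + 1)) := by
      field_simp; ring
    have hrw : x / 2 * (2 * L2 - L1 - L3) + 1 / 2 * (L1 - L3)
        = (x - 1) / 2 * (2 * L2 - L1 - L3) + (L2 - L3) := by ring
    rw [hrw]
    have : -1 / (2 * x + 2) = 1 / (2 * (x + 1)) + (-1 / (x + 1)) := by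
      field_simp; ring
    rw [this]
    exact add_lt_add_of_lt_of_le (hval ▸ hprod) h1
  refine ⟨?_, key⟩
  have hpos : (0:ℝ) < 1 / (2 * x + 2) := by positivity
  have : -1 / (2 * x + 2) < 0 := by
    rw [neg_div]; linarith
  linarith
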